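/- arXiv:2006.12189 — 20 statements merged into one kernel-verified Lean document; each statement's English description precedes it below -/
import Mathlib

section
/- Let (Q, ·) be a quasigroup satisfying the Bol–Moufang identity F1: (x·y)·(z·x) = ((x·y)·z)·x for all x, y, z ∈ Q. Then the operation · is associative and Q has a two-sided unit; that is, (Q, ·) is a group. -/
/-- Quasigroup with Bol–Moufang identity F1: `(x * y) * (z * x) = ((x * y) * z) * x`. -/
theorem quasigroup_F1_result {Q : Type*} [Mul Q] [Nonempty Q]
    (hleft : ∀ a b : Q, ∃! x : Q, a * x = b)
    (hright : ∀ a b : Q, ∃! y : Q, y * a = b)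
    (hid : ∀ x y z : Q, (x * y) * (z * x) = ((x * y) * z) * x) :
    (∀ x y z : Q, (x * y) * z = x * (y * z)) ∧
    ∃ e : Q, (∀ x : Q, e * x = x) ∧ (∀ x : Q, x * e = x) := by
  have assoc : ∀ u z x : Q, (u * z) * x = u * (z * x) := by
    intro u z x
    obtain ⟨y, hy, -⟩ := hleft x u
    calc (u * z) * x = ((x * y) * z) * x := by rw [hy]
    _ = (x * y) * (z * x) := (hid x y z).symm
    _ = u * (z * x) := by rw [hy]
  refine ⟨fun x y z => assoc x y z, ?_⟩
  obtain ⟨a⟩ := ‹Nonempty Q›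
  obtain ⟨e, he, -⟩ := hleft a a
  have runit : ∀ x : Q, x * e = x := by
    intro x
    obtain ⟨y, hy, -⟩ := hright a x
    rw [← hy, assoc, he]
  obtain ⟨f, hf, -⟩ := hright a a
  have lunit : ∀ x : Q, f * x = x := by
    intro x
    obtain ⟨c, hc, -⟩ := hleft a x
    rw [← hc, ← assoc, hf]
  have : f = e := by rw [← runit f, lunit e]
  exact ⟨e, fun x => this ▸ lunit x, runit⟩
end

section
/- Let (Q, ·) be a quasigroup satisfying the Bol–Moufang identity F5: ((x·y)·z)·x = (x·(y·z))·x for all x, y, z ∈ Q. Then the operation · is associative and Q has a two-sided unit; that is, (Q, ·) is a group. -/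
/-- Quasigroup with Bol–Moufang identity F5: `((x * y) * z) * x = (x * (y * z)) * x`. -/
theorem quasigroup_F5_result {Q : Type*} [Mul Q] [Nonempty Q]
    (hleft : ∀ a b : Q, ∃! x : Q, a * x = b)
    (hright : ∀ a b : Q, ∃! y : Q, y * a = b)
    (hid : ∀ x y z : Q, ((x * y) * z) * x = (x * (y * z)) * x) :
    (∀ x y z : Q, (x * y) * z = x * (y * z)) ∧
    ∃ e : Q, (∀ x : Q, e * x = x) ∧ (∀ x : Q, x * e = x) := by
  have rcancel : ∀ a u v : Q, u * a = v * a → u = v := by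
    intro a u v h
    obtain ⟨y, _, hy⟩ := hright a (v * a)
    exact (hy u h).trans (hy v rfl).symm
  have assoc : ∀ x y z : Q, (x * y) * z = x * (y * z) :=
    fun x y z => rcancel x _ _ (hid x y z)
  refine ⟨assoc, ?_⟩
  obtain ⟨a⟩ := ‹Nonempty Q›
  obtain ⟨e, he, _⟩ := hright a a
  have hleft_unit : ∀ x : Q, e * x = x := by
    intro x
    obtain ⟨y, hy, _⟩ := hleft a x
    rw [← hy, ← assoc, he]
  refine ⟨e, hleft_unit, fun x => ?_⟩
  exact rcancel e _ _ (by rw [assoc, hleft_unit])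
end

section
/- Let (Q, ·) be a quasigroup satisfying the Bol–Moufang identity F11: (x·y)·(x·z) = ((x·y)·x)·z for all x, y, z ∈ Q. Then the operation · is associative and Q has a two-sided unit; that is, (Q, ·) is a group. -/
/-- Quasigroup with Bol–Moufang identity F11: `(x * y) * (x * z) = ((x * y) * x) * z`. -/
theorem quasigroup_F11_result {Q : Type*} [Mul Q] [Nonempty Q]
    (hleft : ∀ a b : Q, ∃! x : Q, a * x = b)
    (hright : ∀ a b : Q, ∃! y : Q, y * a = b)
    (hid : ∀ x y z : Q, (x * y) * (x * z) = ((x * y) * x) * z) :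
    (∀ x y z : Q, (x * y) * z = x * (y * z)) ∧
    ∃ e : Q, (∀ x : Q, e * x = x) ∧ (∀ x : Q, x * e = x) := by
  have assoc : ∀ x y z : Q, (x * y) * z = x * (y * z) := by
    intro a b c
    obtain ⟨y, hy, -⟩ := hleft b a
    have := hid b y c
    rw [hy] at this
    exact this.symm
  refine ⟨assoc, ?_⟩
  obtain ⟨a⟩ := ‹Nonempty Q›
  obtain ⟨e, he, -⟩ := hleft a a
  obtain ⟨f, hf, -⟩ := hright a a
  have hre : ∀ b : Q, b * e = b := by
    intro b
    obtain ⟨y, hy, -⟩ := hright a b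
    rw [← hy, assoc, he]
  have hlf : ∀ b : Q, f * b = b := by
    intro b
    obtain ⟨x, hx, -⟩ := hleft a b
    rw [← hx, ← assoc, hf]
  have : e = f := by rw [← hlf e, hre f]
  exact ⟨e, fun x => by rw [this, hlf], hre⟩
end

section
/- Let (Q, ·) be a quasigroup satisfying the Bol–Moufang identity F12: (x·y)·(x·z) = (x·(y·x))·z for all x, y, z ∈ Q. Then the operation · is associative and Q has a two-sided unit; that is, (Q, ·) is a group. -/
/-- Quasigroup with Bol–Moufang identity F12: `(x * y) * (x * z) = (x * (y * x)) * z`. -/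
theorem quasigroup_F12_result {Q : Type*} [Mul Q] [Nonempty Q]
    (hleft : ∀ a b : Q, ∃! x : Q, a * x = b)
    (hright : ∀ a b : Q, ∃! y : Q, y * a = b)
    (hid : ∀ x y z : Q, (x * y) * (x * z) = (x * (y * x)) * z) :
    (∀ x y z : Q, (x * y) * z = x * (y * z)) ∧
    ∃ e : Q, (∀ x : Q, e * x = x) ∧ (∀ x : Q, x * e = x) := by
  -- cancellation lemmas
  have cancel_right : ∀ a w1 w2 : Q, w1 * a = w2 * a → w1 = w2 := by
    intro a w1 w2 h
    obtain ⟨y, hy, hu⟩ := hright a (w2 * a)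
    exact (hu w1 h).trans (hu w2 rfl).symm
  have cancel_left : ∀ a x1 x2 : Q, a * x1 = a * x2 → x1 = x2 := by
    intro a x1 x2 h
    obtain ⟨x, hx, hu⟩ := hleft a (a * x2)
    exact (hu x1 h).trans (hu x2 rfl).symm
  -- a left unit exists
  obtain ⟨x0⟩ := ‹Nonempty Q›
  obtain ⟨e0, he0, -⟩ := hleft x0 x0   -- x0 * e0 = x0
  obtain ⟨y0, hy0, -⟩ := hright x0 e0  -- y0 * x0 = e0
  set f := x0 * y0 with hf
  have hleftunit : ∀ w : Q, f * w = w := by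
    intro w
    obtain ⟨z, hz, -⟩ := hleft x0 w    -- x0 * z = w
    have := hid x0 y0 z
    rw [hy0, he0, hz] at this
    rw [hf]; exact this
  -- f is a right unit
  have hrightunit : ∀ y : Q, y * f = y := by
    intro y
    have := hid f y f
    rw [hleftunit y, hleftunit f, hleftunit (y * f)] at this
    exact cancel_right f _ _ this.symm
  -- flexibility
  have hflex : ∀ x y : Q, (x * y) * x = x * (y * x) := by
    intro x y
    have := hid x y f
    rw [hrightunit x, hrightunit (x * (y * x))] at this
    exact this
  -- associativity
  have hassoc : ∀ u m z : Q, (u * m) * z = u * (m * z) := by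
    intro u m z
    obtain ⟨y, hy, -⟩ := hleft m u     -- m * y = u
    have h1 := hid m y z
    rw [hy, ← hflex m y, hy] at h1
    exact h1.symm
  exact ⟨hassoc, f, hleftunit, hrightunit⟩
end

section
/- Let (Q, ·) be a quasigroup satisfying the Bol–Moufang identity F14: (x·y)·(x·z) = x·(y·(x·z)) for all x, y, z ∈ Q. Then the operation · is associative and Q has a two-sided unit; that is, (Q, ·) is a group. -/
/-- Quasigroup with Bol–Moufang identity F14: `(x * y) * (x * z) = x * (y * (x * z))`. -/
theorem quasigroup_F14_result {Q : Type*} [Mul Q] [Nonempty Q]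
    (hleft : ∀ a b : Q, ∃! x : Q, a * x = b)
    (hright : ∀ a b : Q, ∃! y : Q, y * a = b)
    (hid : ∀ x y z : Q, (x * y) * (x * z) = x * (y * (x * z))) :
    (∀ x y z : Q, (x * y) * z = x * (y * z)) ∧
    ∃ e : Q, (∀ x : Q, e * x = x) ∧ (∀ x : Q, x * e = x) := by
  have assoc : ∀ x y w : Q, (x * y) * w = x * (y * w) := by
    intro x y w
    obtain ⟨z, hz, -⟩ := hleft x w
    rw [← hz]; exact hid x y z
  refine ⟨assoc, ?_⟩
  obtain ⟨a⟩ := ‹Nonempty Q›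
  obtain ⟨e, he, -⟩ := hleft a a
  obtain ⟨f, hf, -⟩ := hright a a
  have hre : ∀ b : Q, b * e = b := by
    intro b
    obtain ⟨y, hy, -⟩ := hright a b
    rw [← hy, assoc, he]
  have hlf : ∀ b : Q, f * b = b := by
    intro b
    obtain ⟨x, hx, -⟩ := hleft a b
    rw [← hx, ← assoc, hf]
  have hef : e = f := by rw [← hlf e, hre f]
  exact ⟨e, fun x => by rw [hef, hlf], hre⟩
end

section
/- Let (Q, ·) be a quasigroup satisfying the Bol–Moufang identity F18: (x·(y·x))·z = x·((y·x)·z) for all x, y, z ∈ Q. Then the operation · is associative and Q has a two-sided unit; that is, (Q, ·) is a group. -/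
/-- Quasigroup with Bol–Moufang identity F18: `(x * (y * x)) * z = x * ((y * x) * z)`. -/
theorem quasigroup_F18_result {Q : Type*} [Mul Q] [Nonempty Q]
    (hleft : ∀ a b : Q, ∃! x : Q, a * x = b)
    (hright : ∀ a b : Q, ∃! y : Q, y * a = b)
    (hid : ∀ x y z : Q, (x * (y * x)) * z = x * ((y * x) * z)) :
    (∀ x y z : Q, (x * y) * z = x * (y * z)) ∧
    ∃ e : Q, (∀ x : Q, e * x = x) ∧ (∀ x : Q, x * e = x) := by
  have assoc : ∀ x y z : Q, (x * y) * z = x * (y * z) := by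
    intro x w z
    obtain ⟨y, hy, -⟩ := hright x w
    rw [← hy, hid]
  refine ⟨assoc, ?_⟩
  obtain ⟨a⟩ := ‹Nonempty Q›
  obtain ⟨e, he, -⟩ := hleft a a
  obtain ⟨f, hf, -⟩ := hright a a
  have hre : ∀ b : Q, b * e = b := by
    intro b
    obtain ⟨y, hy, -⟩ := hright a b
    rw [← hy, assoc, he]
  have hle : ∀ b : Q, f * b = b := by
    intro b
    obtain ⟨x, hx, -⟩ := hleft a b
    rw [← hx, ← assoc, hf]
  have : f = e := by rw [← hre f, hle]
  exact ⟨e, by rw [← this]; exact hle, hre⟩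
end

section
/- Let (Q, ·) be a quasigroup satisfying the Bol–Moufang identity F20: x·((y·x)·z) = x·(y·(x·z)) for all x, y, z ∈ Q. Then the operation · is associative and Q has a two-sided unit; that is, (Q, ·) is a group. -/
/-- Quasigroup with Bol–Moufang identity F20: `x * ((y * x) * z) = x * (y * (x * z))`. -/
theorem quasigroup_F20_result {Q : Type*} [Mul Q] [Nonempty Q]
    (hleft : ∀ a b : Q, ∃! x : Q, a * x = b)
    (hright : ∀ a b : Q, ∃! y : Q, y * a = b)
    (hid : ∀ x y z : Q, x * ((y * x) * z) = x * (y * (x * z))) :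
    (∀ x y z : Q, (x * y) * z = x * (y * z)) ∧
    ∃ e : Q, (∀ x : Q, e * x = x) ∧ (∀ x : Q, x * e = x) := by
  have cancel : ∀ x A B : Q, x * A = x * B → A = B := by
    intro x A B h
    obtain ⟨u, hu, huniq⟩ := hleft x (x * B)
    rw [huniq A h, huniq B rfl]
  have assoc : ∀ x y z : Q, (x * y) * z = x * (y * z) :=
    fun x y z => cancel y _ _ (hid y x z)
  obtain ⟨a⟩ := ‹Nonempty Q›
  obtain ⟨e, he, -⟩ := hright a a
  obtain ⟨f, hf, -⟩ := hleft a a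
  have hL : ∀ x : Q, e * x = x := by
    intro x
    obtain ⟨t, ht, -⟩ := hleft a x
    rw [← ht, ← assoc, he]
  have hR : ∀ x : Q, x * f = x := by
    intro x
    obtain ⟨s, hs, -⟩ := hright a x
    rw [← hs, assoc, hf]
  have hef : e = f := by rw [← hL f, hR e]
  exact ⟨assoc, e, hL, fun x => by rw [hef, hR]⟩
end

section
/- Let (Q, ·) be a quasigroup satisfying the Bol–Moufang identity F31: (y·x)·(x·z) = ((y·x)·x)·z for all x, y, z ∈ Q. Then the operation · is associative and Q has a two-sided unit; that is, (Q, ·) is a group. -/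
/-- Quasigroup with Bol–Moufang identity F31: `(y * x) * (x * z) = ((y * x) * x) * z`. -/
theorem quasigroup_F31_result {Q : Type*} [Mul Q] [Nonempty Q]
    (hleft : ∀ a b : Q, ∃! x : Q, a * x = b)
    (hright : ∀ a b : Q, ∃! y : Q, y * a = b)
    (hid : ∀ x y z : Q, (y * x) * (x * z) = ((y * x) * x) * z) :
    (∀ x y z : Q, (x * y) * z = x * (y * z)) ∧
    ∃ e : Q, (∀ x : Q, e * x = x) ∧ (∀ x : Q, x * e = x) := by
  have assoc : ∀ x y z : Q, (x * y) * z = x * (y * z) := by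
    intro w x z
    obtain ⟨y, hy, -⟩ := hright x w
    calc (w * x) * z = ((y * x) * x) * z := by rw [hy]
    _ = (y * x) * (x * z) := (hid x y z).symm
    _ = w * (x * z) := by rw [hy]
  refine ⟨assoc, ?_⟩
  obtain ⟨a⟩ := ‹Nonempty Q›
  obtain ⟨e, he, -⟩ := hleft a a
  obtain ⟨f, hf, -⟩ := hright a a
  have hre : ∀ x : Q, x * e = x := by
    intro x
    obtain ⟨y, hy, -⟩ := hright a x
    rw [← hy, assoc, he]
  have hlf : ∀ x : Q, f * x = x := by
    intro x
    obtain ⟨z, hz, -⟩ := hleft a x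
    rw [← hz, ← assoc, hf]
  have : e = f := by rw [← hlf e, hre f]
  exact ⟨e, fun x => by rw [this, hlf], hre⟩
end

section
/- Let (Q, ·) be a quasigroup satisfying the Bol–Moufang identity F32: (y·x)·(x·z) = (y·(x·x))·z for all x, y, z ∈ Q. Then the operation · is associative and Q has a two-sided unit; that is, (Q, ·) is a group. -/
/-- Quasigroup with Bol–Moufang identity F32: `(y * x) * (x * z) = (y * (x * x)) * z`. -/
theorem quasigroup_F32_result {Q : Type*} [Mul Q] [Nonempty Q]
    (hleft : ∀ a b : Q, ∃! x : Q, a * x = b)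
    (hright : ∀ a b : Q, ∃! y : Q, y * a = b)
    (hid : ∀ x y z : Q, (y * x) * (x * z) = (y * (x * x)) * z) :
    (∀ x y z : Q, (x * y) * z = x * (y * z)) ∧
    ∃ e : Q, (∀ x : Q, e * x = x) ∧ (∀ x : Q, x * e = x) := by
  obtain ⟨a⟩ := (inferInstance : Nonempty Q)
  -- a global left unit f
  obtain ⟨s₀, hs₀⟩ := (hright (a * a) a).exists
  set f := s₀ * a with hf
  have hfl : ∀ b : Q, f * b = b := by
    intro b
    obtain ⟨z, hz⟩ := (hleft a b).exists
    have h := hid a s₀ z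
    rw [hs₀, hz] at h
    exact h
  -- f is also a right unit
  have main : ∀ x : Q, x * f = x := by
    intro x
    obtain ⟨s, hs⟩ := (hright (x * x) x).exists
    -- s * x is a left unit, hence equals f
    have hfl' : ∀ b : Q, (s * x) * b = b := by
      intro b
      obtain ⟨z, hz⟩ := (hleft x b).exists
      have h := hid x s z
      rw [hs, hz] at h
      exact h
    have hff : s * x = f := (hright f f).unique (hfl' f) (hfl f)
    obtain ⟨y, hy⟩ := (hright s x).exists
    -- instance (i): x*x = (y*(s*s))*(x*x)
    have hi := hid s y (x * x)
    rw [hy, hs] at hi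
    have hc : y * (s * s) = f :=
      (hright (x * x) (x * x)).unique hi.symm (hfl (x * x))
    -- instance (ii): x*(s*x) = (y*(s*s))*x
    have hii := hid s y x
    rw [hy, hff, hc] at hii
    rw [hii, hfl x]
  -- right alternative law: (y*x)*x = y*(x*x)
  have star : ∀ y x : Q, (y * x) * x = y * (x * x) := by
    intro y x
    have h := hid x y f
    rw [main x, main (y * (x * x))] at h
    exact h
  -- associativity
  have assoc : ∀ u v w : Q, (u * v) * w = u * (v * w) := by
    intro u v w
    obtain ⟨y, hy⟩ := (hright v u).exists
    have h := hid v y w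
    rw [← star y v, hy] at h
    exact h.symm
  exact ⟨assoc, f, hfl, main⟩
end

section
/- Let (Q, ·) be a quasigroup satisfying the Bol–Moufang identity F47: (x·(x·y))·z = x·((x·y)·z) for all x, y, z ∈ Q. Then the operation · is associative and Q has a two-sided unit; that is, (Q, ·) is a group. -/
/-- Quasigroup with Bol–Moufang identity F47: `(x * (x * y)) * z = x * ((x * y) * z)`. -/
theorem quasigroup_F47_result {Q : Type*} [Mul Q] [Nonempty Q]
    (hleft : ∀ a b : Q, ∃! x : Q, a * x = b)
    (hright : ∀ a b : Q, ∃! y : Q, y * a = b)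
    (hid : ∀ x y z : Q, (x * (x * y)) * z = x * ((x * y) * z)) :
    (∀ x y z : Q, (x * y) * z = x * (y * z)) ∧
    ∃ e : Q, (∀ x : Q, e * x = x) ∧ (∀ x : Q, x * e = x) := by
  have assoc : ∀ x y z : Q, (x * y) * z = x * (y * z) := by
    intro x u z
    obtain ⟨y, hy, -⟩ := hleft x u
    have h := hid x y z
    rw [hy] at h
    exact h
  refine ⟨assoc, ?_⟩
  obtain ⟨a⟩ := ‹Nonempty Q›
  obtain ⟨e, he, -⟩ := hleft a a
  obtain ⟨f, hf, -⟩ := hright a a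
  have hre : ∀ b : Q, b * e = b := by
    intro b
    obtain ⟨y, hy, -⟩ := hright a b
    rw [← hy, assoc, he]
  have hle : ∀ b : Q, f * b = b := by
    intro b
    obtain ⟨x, hx, -⟩ := hleft a b
    rw [← hx, ← assoc, hf]
  have hfe : f = e := (hre f).symm.trans (hle e)
  exact ⟨e, fun x => hfe ▸ hle x, hre⟩
end

section
/- Let (Q, ·) be a quasigroup satisfying the Bol–Moufang identity F7: ((x·y)·z)·x = x·((y·z)·x) for all x, y, z ∈ Q. Then Q has a left unit, i.e., there exists f ∈ Q with f·x = x for all x ∈ Q. -/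
/-- Quasigroup with Bol–Moufang identity F7: `((x * y) * z) * x = x * ((y * z) * x)`. -/
theorem quasigroup_F7_result {Q : Type*} [Mul Q] [Nonempty Q]
    (hleft : ∀ a b : Q, ∃! x : Q, a * x = b)
    (hright : ∀ a b : Q, ∃! y : Q, y * a = b)
    (hid : ∀ x y z : Q, ((x * y) * z) * x = x * ((y * z) * x)) :
    ∃ f : Q, ∀ x : Q, f * x = x := by
  obtain ⟨a⟩ := ‹Nonempty Q›
  -- cancellation laws
  have lcan : ∀ x u v : Q, x * u = x * v → u = v := by
    intro x u v h
    obtain ⟨w, hw, huniq⟩ := hleft x (x * v)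
    exact (huniq u h).trans (huniq v rfl).symm
  have rcan : ∀ x u v : Q, u * x = v * x → u = v := by
    intro x u v h
    obtain ⟨w, hw, huniq⟩ := hright x (v * x)
    exact (huniq u h).trans (huniq v rfl).symm
  -- local right units r x and local left units l x
  choose r hr using fun x => (hleft x x).exists
  choose l hl using fun x => (hright x x).exists
  -- (1): (x z) x = x ((r x * z) x)
  have h1 : ∀ x z : Q, (x * z) * x = x * ((r x * z) * x) := by
    intro x z
    have := hid x (r x) z
    rwa [hr x] at this
  -- (6): y * r (x*y) = r x * y
  have h6 : ∀ x y : Q, y * r (x * y) = r x * y := by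
    intro x y
    have A := hid x y (r (x * y))
    rw [hr (x * y)] at A
    have B := h1 x y
    exact rcan x _ _ (lcan x _ _ (A.symm.trans B))
  -- l y is idempotent
  have h7 : ∀ y : Q, l y * l y = l y := by
    intro y
    have h := h6 (l y) y
    rw [hl y, hr y] at h
    have h2 : r (l y) = l y := rcan y _ _ (h.symm.trans (hl y).symm)
    have := hr (l y)
    rwa [h2] at this
  -- e := l a is a left unit
  refine ⟨l a, ?_⟩
  intro b
  set e := l a with he
  have hee : e * e = e := h7 a
  have hre : r e = e := lcan e _ _ ((hr e).trans hee.symm)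
  obtain ⟨w, hw⟩ := (hright e b).exists
  obtain ⟨z, hz⟩ := (hleft e w).exists
  have := h1 e z
  rw [hre, hz, hw] at this
  exact this.symm
end

section
/- Let (Q, ·) be a quasigroup satisfying the Bol–Moufang identity F16: ((x·y)·x)·z = x·((y·x)·z) for all x, y, z ∈ Q. Then Q has a left unit, i.e., there exists f ∈ Q with f·x = x for all x ∈ Q. -/
/-- Quasigroup with Bol–Moufang identity F16: `((x * y) * x) * z = x * ((y * x) * z)`. -/
theorem quasigroup_F16_result {Q : Type*} [Mul Q] [Nonempty Q]
    (hleft : ∀ a b : Q, ∃! x : Q, a * x = b)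
    (hright : ∀ a b : Q, ∃! y : Q, y * a = b)
    (hid : ∀ x y z : Q, ((x * y) * x) * z = x * ((y * x) * z)) :
    ∃ f : Q, ∀ x : Q, f * x = x := by
  obtain ⟨a⟩ := ‹Nonempty Q›
  obtain ⟨u, hu, -⟩ := hright a a
  obtain ⟨y, hy, -⟩ := hleft a u
  refine ⟨y * a, fun z => ?_⟩
  have h := hid a y z
  rw [hy, hu] at h
  obtain ⟨w, -, hwu⟩ := hleft a (a * z)
  rw [hwu ((y * a) * z) h.symm, hwu z rfl]
end

section
/- Let (Q, ·) be a quasigroup satisfying the left Bol identity F19: (x·(y·x))·z = x·(y·(x·z)) for all x, y, z ∈ Q. Then Q has a right unit, i.e., there exists e ∈ Q with x·e = x for all x ∈ Q. -/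
/-- Quasigroup with Bol–Moufang identity F19: `(x * (y * x)) * z = x * (y * (x * z))`. -/
theorem quasigroup_F19_result {Q : Type*} [Mul Q] [Nonempty Q]
    (hleft : ∀ a b : Q, ∃! x : Q, a * x = b)
    (hright : ∀ a b : Q, ∃! y : Q, y * a = b)
    (hid : ∀ x y z : Q, (x * (y * x)) * z = x * (y * (x * z))) :
    ∃ e : Q, ∀ x : Q, x * e = x := by
  obtain ⟨x₀⟩ := ‹Nonempty Q›
  obtain ⟨u, hu, -⟩ := hleft x₀ x₀
  refine ⟨u, fun a => ?_⟩
  obtain ⟨t, ht, -⟩ := hleft x₀ a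
  obtain ⟨y, hy, -⟩ := hright x₀ t
  have h := hid x₀ y u
  rw [hu, hy, ht] at h
  exact h
end

section
/- Let (Q, ·) be a quasigroup satisfying the Bol–Moufang identity F35: ((y·x)·x)·z = (y·(x·x))·z for all x, y, z ∈ Q. Then Q has a right unit, i.e., there exists e ∈ Q with x·e = x for all x ∈ Q. -/
/-- Quasigroup with Bol–Moufang identity F35: `((y * x) * x) * z = (y * (x * x)) * z`. -/
theorem quasigroup_F35_result {Q : Type*} [Mul Q] [Nonempty Q]
    (hleft : ∀ a b : Q, ∃! x : Q, a * x = b)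
    (hright : ∀ a b : Q, ∃! y : Q, y * a = b)
    (hid : ∀ x y z : Q, ((y * x) * x) * z = (y * (x * x)) * z) :
    ∃ e : Q, ∀ x : Q, x * e = x := by
  -- cancel z on the right
  have key : ∀ x y : Q, (y * x) * x = y * (x * x) := by
    intro x y
    exact ((hright x (((y * x) * x) * x)).unique rfl (hid x y x).symm)
  obtain ⟨a⟩ := ‹Nonempty Q›
  obtain ⟨u, hu, -⟩ := hleft a a
  have hidem : u * u = u := by
    have h1 : a * (u * u) = a := by
      rw [← key, hu, hu]
    exact (hleft a a).unique h1 hu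
  refine ⟨u, fun y => ?_⟩
  obtain ⟨w, hw, -⟩ := hright u y
  have : (w * u) * u = w * u := by rw [key, hidem]
  rw [hw] at this
  exact this
end

section
/- Let (Q, ·) be a quasigroup satisfying the RC identity F36: ((y·x)·x)·z = y·((x·x)·z) for all x, y, z ∈ Q. Then Q has a left unit, i.e., there exists f ∈ Q with f·x = x for all x ∈ Q. -/
/-- Quasigroup with Bol–Moufang identity F36: `((y * x) * x) * z = y * ((x * x) * z)`. -/
theorem quasigroup_F36_result {Q : Type*} [Mul Q] [Nonempty Q]
    (hleft : ∀ a b : Q, ∃! x : Q, a * x = b)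
    (hright : ∀ a b : Q, ∃! y : Q, y * a = b)
    (hid : ∀ x y z : Q, ((y * x) * x) * z = y * ((x * x) * z)) :
    ∃ f : Q, ∀ x : Q, f * x = x := by
  obtain ⟨x⟩ := ‹Nonempty Q›
  obtain ⟨v, hv, -⟩ := hright x x
  refine ⟨v, fun t => ?_⟩
  obtain ⟨u, hu, -⟩ := hleft (x * x) t
  have h := hid x v u
  rw [hv, hu] at h
  exact h.symm
end

section
/- Let (Q, ·) be a quasigroup satisfying the Bol–Moufang identity F38: (y·(x·x))·z = y·((x·x)·z) for all x, y, z ∈ Q. Then Q has both a left unit and a right unit; that is, (Q, ·) is a loop. -/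
/-- Quasigroup with Bol–Moufang identity F38: `(y * (x * x)) * z = y * ((x * x) * z)`. -/
theorem quasigroup_F38_result {Q : Type*} [Mul Q] [Nonempty Q]
    (hleft : ∀ a b : Q, ∃! x : Q, a * x = b)
    (hright : ∀ a b : Q, ∃! y : Q, y * a = b)
    (hid : ∀ x y z : Q, (y * (x * x)) * z = y * ((x * x) * z)) :
    (∃ f : Q, ∀ x : Q, f * x = x) ∧ (∃ e : Q, ∀ x : Q, x * e = x) := by
  obtain ⟨a⟩ := ‹Nonempty Q›
  obtain ⟨e, he, -⟩ := hleft (a * a) (a * a)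
  obtain ⟨f, hf, -⟩ := hright (a * a) (a * a)
  constructor
  · refine ⟨f, fun x => ?_⟩
    obtain ⟨z, hz, -⟩ := hleft (a * a) x
    rw [← hz, ← hid a f z, hf]
  · refine ⟨e, fun x => ?_⟩
    obtain ⟨y, hy, -⟩ := hright (a * a) x
    rw [← hy, hid a y e, he]
end

section
/- Let (Q, ·) be a quasigroup satisfying the LC identity F41: (x·x)·(y·z) = (x·(x·y))·z for all x, y, z ∈ Q. Then Q has both a left unit and a right unit; that is, (Q, ·) is a loop. -/
/-- Quasigroup with Bol–Moufang identity F41: `(x * x) * (y * z) = (x * (x * y)) * z`. -/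
theorem quasigroup_F41_result {Q : Type*} [Mul Q] [Nonempty Q]
    (hleft : ∀ a b : Q, ∃! x : Q, a * x = b)
    (hright : ∀ a b : Q, ∃! y : Q, y * a = b)
    (hid : ∀ x y z : Q, (x * x) * (y * z) = (x * (x * y)) * z) :
    (∃ f : Q, ∀ x : Q, f * x = x) ∧ (∃ e : Q, ∀ x : Q, x * e = x) := by
  obtain ⟨a⟩ := ‹Nonempty Q›
  obtain ⟨y, hy, -⟩ := hleft a a
  have hleftunit : ∀ z, y * z = z := by
    intro z
    have h := hid a y z
    rw [hy] at h
    obtain ⟨w, hw, huniq⟩ := hleft (a * a) ((a * a) * z)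
    exact (huniq _ h).trans (huniq _ rfl).symm
  have hrightunit : ∀ x : Q, x * y = x := by
    intro x
    have h := hid x y x
    rw [hleftunit x] at h
    have h2 : x * x = x * (x * y) := by
      obtain ⟨w, hw, huniq⟩ := hright x ((x * x) * x)
      exact (huniq _ rfl).trans (huniq _ h.symm).symm
    obtain ⟨w, hw, huniq⟩ := hleft x (x * x)
    exact (huniq _ h2.symm).trans (huniq _ rfl).symm
  exact ⟨⟨y, hleftunit⟩, ⟨y, hrightunit⟩⟩
end

section
/- Let (Q, ·) be a quasigroup satisfying the Bol–Moufang identity F43: (x·x)·(y·z) = x·(x·(y·z)) for all x, y, z ∈ Q. Then Q has a left unit, i.e., there exists f ∈ Q with f·x = x for all x ∈ Q. Moreover, for every z ∈ Q the element f_z with f_z·z = z satisfies f_z·f_z = f_z. -/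
/-- Quasigroup with Bol–Moufang identity F43: `(x * x) * (y * z) = x * (x * (y * z))`. -/
theorem quasigroup_F43_result {Q : Type*} [Mul Q] [Nonempty Q]
    (hleft : ∀ a b : Q, ∃! x : Q, a * x = b)
    (hright : ∀ a b : Q, ∃! y : Q, y * a = b)
    (hid : ∀ x y z : Q, (x * x) * (y * z) = x * (x * (y * z))) :
    (∃ f : Q, ∀ x : Q, f * x = x) ∧ (∀ z fz : Q, fz * z = z → fz * fz = fz) := by
  -- identity holds for all w, since every w is a product
  have hid' : ∀ x w : Q, (x * x) * w = x * (x * w) := by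
    intro x w
    obtain ⟨u, hu, -⟩ := hleft x w
    calc (x * x) * w = (x * x) * (x * u) := by rw [hu]
      _ = x * (x * (x * u)) := hid x x u
      _ = x * (x * w) := by rw [hu]
  have idem : ∀ z fz : Q, fz * z = z → fz * fz = fz := by
    intro z fz hfz
    obtain ⟨y, hy, hyu⟩ := hright z z
    have h1 : (fz * fz) * z = z := by rw [hid', hfz, hfz]
    rw [hyu _ h1, hyu _ hfz]
  refine ⟨?_, idem⟩
  obtain ⟨z⟩ := ‹Nonempty Q›
  obtain ⟨f, hf, -⟩ := hright z z
  have hff : f * f = f := idem z f hf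
  refine ⟨f, fun x => ?_⟩
  have h : f * (f * x) = f * x := by rw [← hid', hff]
  obtain ⟨u, hu, huu⟩ := hleft f (f * x)
  rw [huu (f * x) h, huu x rfl]
end

section
/- Let (Q, ·) be a quasigroup satisfying the Bol–Moufang identity F44: (x·x)·(y·z) = x·((x·y)·z) for all x, y, z ∈ Q. Then Q has a left unit, i.e., there exists f ∈ Q with f·x = x for all x ∈ Q. -/
/-- Quasigroup with Bol–Moufang identity F44: `(x * x) * (y * z) = x * ((x * y) * z)`. -/
theorem quasigroup_F44_result {Q : Type*} [Mul Q] [Nonempty Q]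
    (hleft : ∀ a b : Q, ∃! x : Q, a * x = b)
    (hright : ∀ a b : Q, ∃! y : Q, y * a = b)
    (hid : ∀ x y z : Q, (x * x) * (y * z) = x * ((x * y) * z)) :
    ∃ f : Q, ∀ x : Q, f * x = x := by
  obtain ⟨a⟩ := ‹Nonempty Q›
  obtain ⟨e, he, heu⟩ := hright a a
  obtain ⟨r, hr, -⟩ := hleft a a
  -- e is idempotent
  have hee : e * e = e := by
    have h1 := hid e a r
    rw [hr, he, hr, he] at h1
    exact heu _ h1
  refine ⟨e, fun y => ?_⟩
  have h2 := hid e y y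
  rw [hee] at h2
  have h3 : y * y = (e * y) * y := (hleft e (e * (y * y))).unique rfl h2.symm
  exact (hright y (y * y)).unique h3.symm rfl
end

section
/- Let (Q, ·) be a quasigroup satisfying the Bol–Moufang identity F49: ((x·x)·y)·z = x·((x·y)·z) for all x, y, z ∈ Q. Then Q has a left unit, i.e., there exists f ∈ Q with f·x = x for all x ∈ Q. -/
/-- Quasigroup with Bol–Moufang identity F49: `((x * x) * y) * z = x * ((x * y) * z)`. -/
theorem quasigroup_F49_result {Q : Type*} [Mul Q] [Nonempty Q]
    (hleft : ∀ a b : Q, ∃! x : Q, a * x = b)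
    (hright : ∀ a b : Q, ∃! y : Q, y * a = b)
    (hid : ∀ x y z : Q, ((x * x) * y) * z = x * ((x * y) * z)) :
    ∃ f : Q, ∀ x : Q, f * x = x := by
  obtain ⟨a⟩ := ‹Nonempty Q›
  obtain ⟨y, hy, -⟩ := hleft (a * a) a
  refine ⟨a * y, fun z => ?_⟩
  have h := hid a y z
  rw [hy] at h
  obtain ⟨w, -, hu⟩ := hleft a (a * z)
  exact ((hu _ h.symm).trans (hu z rfl).symm)
end
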